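/- Let π_B, π_C, π_D > 0 with π_B + π_C + π_D = 1. Define the Bradley-Terry win probabilities p_BC = π_B/(π_B + π_C), p_BD = π_B/(π_B + π_D), p_CD = π_C/(π_C + π_D), and the pool-win probabilities q_B = p_BC·p_BD and q_C = (1 − p_BC)·p_CD. Then q_B · π_C²·(1 − π_C) = q_C · π_B²·(1 − π_B); equivalently q_B/q_C = f(π_B)/f(π_C) where f(x) = x²·(1 − x). -/

import Mathlib

/-!
Because the strengths sum to one, `1 - π_C = π_B + π_D`, so multiplying
`q_B = π_B² / ((π_B + π_C)(π_B + π_D))` by `π_C² (1 - π_C)` cancels the factor `π_B + π_D`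
and leaves `π_B² π_C² / (π_B + π_C)`. This expression is symmetric in `B` and `C`, and the same
computation for `C` (using `1 - π_B = π_C + π_D`) produces it as well.
-/

section BradleyTerry

variable {K : Type*} [Field K]

theorem one_sub_div_add_self {x y : K} (h : x + y ≠ 0) : 1 - x / (x + y) = y / (y + x) := by
  rw [one_sub_div h, add_sub_cancel_left, add_comm]

theorem div_add_mul_div_add_mul_sq {x y z : K} (hxz : x + z ≠ 0) :
    x / (x + y) * (x / (x + z)) * (y ^ 2 * (x + z)) = x ^ 2 * y ^ 2 / (x + y) := by
  field_simp

end BradleyTerry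

theorem pool_win_ratio (πB πC πD : ℝ) (hB : 0 < πB) (hC : 0 < πC) (hD : 0 < πD)
    (hsum : πB + πC + πD = 1)
    (pBC pBD pCD qB qC : ℝ)
    (hpBC : pBC = πB / (πB + πC)) (hpBD : pBD = πB / (πB + πD))
    (hpCD : pCD = πC / (πC + πD))
    (hqB : qB = pBC * pBD) (hqC : qC = (1 - pBC) * pCD) :
    qB * (πC ^ 2 * (1 - πC)) = qC * (πB ^ 2 * (1 - πB)) := by
  subst hqB hqC hpBC hpBD hpCD
  have hC' : 1 - πC = πB + πD := by linarith
  have hB' : 1 - πB = πC + πD := by linarith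
  rw [hC', hB', one_sub_div_add_self (by positivity), div_add_mul_div_add_mul_sq (by positivity),
    div_add_mul_div_add_mul_sq (by positivity), add_comm πC πB, mul_comm (πC ^ 2)]
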